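/- Let R be a finite commutative ring with unity. If every residue field R/m (m maximal ideal) has odd characteristic, then χ(Reg(Γ(R))) = ω(Reg(Γ(R))) = 2^k, where k is the number of maximal ideals of R. -/

import Mathlib

/-- The induced subgraph of the total graph on the regular elements (non-zero-divisors):
distinct regular `x, y` adjacent iff `x + y` is a zero-divisor. -/
def regGraph (R : Type*) [CommRing R] :
    SimpleGraph {x : R // ¬∃ y : R, y ≠ 0 ∧ x * y = 0} :=
  SimpleGraph.fromRel (fun x y => ∃ z : R, z ≠ 0 ∧ ((x : R) + y) * z = 0)

section Aux

variable {R : Type*} [CommRing R] [Fintype R]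

lemma reg_iff_unit [Nontrivial R] (x : R) :
    (¬∃ y : R, y ≠ 0 ∧ x * y = 0) ↔ IsUnit x := by
  constructor
  · intro h
    have hinj : Function.Injective (fun y : R => x * y) := by
      intro a b hab
      by_contra hne
      exact h ⟨a - b, sub_ne_zero.mpr hne, by
        simp only at hab; rw [mul_sub, hab, sub_self]⟩
    obtain ⟨z, hz⟩ := Finite.injective_iff_surjective.mp hinj 1
    exact IsUnit.of_mul_eq_one (a := x) z hz
  · rintro hx ⟨y, hy, hxy⟩
    exact hy (hx.mul_right_eq_zero.mp hxy)

lemma regGraph_adj [Nontrivial R] (a b : {x : R // ¬∃ y : R, y ≠ 0 ∧ x * y = 0}) :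
    (regGraph R).Adj a b ↔ a ≠ b ∧ ¬ IsUnit ((a : R) + b) := by
  rw [regGraph, SimpleGraph.fromRel_adj]
  have hzd : ∀ w : R, (∃ z : R, z ≠ 0 ∧ w * z = 0) ↔ ¬ IsUnit w := by
    intro w
    rw [← reg_iff_unit w, not_not]
  rw [add_comm (b : R) a, or_self, hzd]

omit [Fintype R] in
lemma one_ne_neg_one_of_oddChar {m : Ideal R} (hm : m.IsMaximal)
    (hodd : Odd (ringChar (R ⧸ m))) : (1 : R ⧸ m) ≠ -1 := by
  haveI := hm
  intro h
  have h2 : ((2 : ℕ) : R ⧸ m) = 0 := by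
    push_cast
    linear_combination h
  have hdvd : ringChar (R ⧸ m) ∣ 2 := (ringChar.spec _ 2).mp h2
  rcases (Nat.dvd_prime Nat.prime_two).mp hdvd with h1 | h1
  · exact CharP.char_ne_one (R ⧸ m) (ringChar (R ⧸ m)) h1
  · rw [h1] at hodd
    simp [Nat.odd_iff] at hodd

end Aux

theorem stmt16 (R : Type*) [CommRing R] [Fintype R]
    (hodd : ∀ m : Ideal R, m.IsMaximal → Odd (ringChar (R ⧸ m))) :
    (regGraph R).chromaticNumber =
        ((2 ^ {m : Ideal R | m.IsMaximal}.ncard : ℕ) : ℕ∞) ∧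
    (regGraph R).cliqueNum = 2 ^ {m : Ideal R | m.IsMaximal}.ncard := by
  classical
  haveI : Fintype {x : R // ¬∃ y : R, y ≠ 0 ∧ x * y = 0} := Fintype.ofFinite _
  rcases subsingleton_or_nontrivial R with hs | hn
  · -- trivial ring
    have hset : {m : Ideal R | m.IsMaximal} = ∅ := by
      ext m
      simp only [Set.mem_setOf_eq, Set.mem_empty_iff_false, iff_false]
      intro hm
      exact hm.ne_top (Subsingleton.elim _ _)
    rw [hset]
    simp only [Set.ncard_empty, pow_zero]
    have hbot : regGraph R = ⊥ := by
      ext a b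
      simp [regGraph, SimpleGraph.fromRel_adj, Subsingleton.elim a b]
    haveI : Nonempty {x : R // ¬∃ y : R, y ≠ 0 ∧ x * y = 0} :=
      ⟨⟨0, by rintro ⟨y, hy, -⟩; exact hy (Subsingleton.elim _ _)⟩⟩
    constructor
    · rw [hbot, SimpleGraph.chromaticNumber_bot]; norm_num
    · refine le_antisymm ?_ ?_
      · obtain ⟨s, hs'⟩ := (regGraph R).exists_isNClique_cliqueNum
        rw [← hs'.card_eq]
        refine Finset.card_le_one.mpr (fun a _ b _ => Subsingleton.elim a b)
      · have h1 : (regGraph R).IsClique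
            ((({Classical.arbitrary _} : Finset {x : R // ¬∃ y : R, y ≠ 0 ∧ x * y = 0})) : Set _) := by
          simp
        have h2 := SimpleGraph.IsClique.card_le_cliqueNum (tc := h1)
        simpa using h2
  · -- nontrivial ring
    haveI : Finite (Ideal R) :=
      Finite.of_injective (fun I : Ideal R => (I : Set R)) SetLike.coe_injective
    set S := {m : Ideal R | m.IsMaximal} with hS
    haveI : Fintype ↥S := Fintype.ofFinite _
    set k := S.ncard with hk
    have hcard : Fintype.card ↥S = k := by
      rw [hk, ← Nat.card_coe_set_eq, Nat.card_eq_fintype_card]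
    -- sign functions
    have key : ∀ m : ↥S, ∃ s : (R ⧸ (m : Ideal R)) → Bool,
        ∀ a : R ⧸ (m : Ideal R), a ≠ 0 → s a ≠ s (-a) := by
      intro m
      haveI : (m : Ideal R).IsMaximal := m.2
      haveI : Finite (R ⧸ (m : Ideal R)) :=
        Finite.of_surjective _ Ideal.Quotient.mk_surjective
      haveI : Fintype (R ⧸ (m : Ideal R)) := Fintype.ofFinite _
      set e := Fintype.equivFin (R ⧸ (m : Ideal R)) with he
      refine ⟨fun a => decide (e a < e (-a)), ?_⟩
      intro a ha
      have hne : a ≠ -a := by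
        intro h
        have h2a : (2 : R ⧸ (m : Ideal R)) * a = 0 := by
          linear_combination h
        rcases mul_eq_zero.mp h2a with h2 | h2
        · have h2' : ((2 : ℕ) : R ⧸ (m : Ideal R)) = 0 := by push_cast; exact h2
          have hdvd : ringChar (R ⧸ (m : Ideal R)) ∣ 2 := (ringChar.spec _ 2).mp h2'
          rcases (Nat.dvd_prime Nat.prime_two).mp hdvd with h1 | h1
          · exact CharP.char_ne_one (R ⧸ (m : Ideal R)) _ h1
          · have := hodd m m.2
            rw [h1] at this
            simp [Nat.odd_iff] at this
        · exact ha h2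
      have hlt : e a ≠ e (-a) := fun h => hne (e.injective h)
      rcases lt_or_gt_of_ne hlt with h | h
      · simp only [neg_neg]
        simp [h, not_lt.mpr (le_of_lt h)]
      · simp only [neg_neg]
        simp [h, not_lt.mpr (le_of_lt h)]
    choose sgn hsgn using key
    -- vertices are units
    have hvunit : ∀ x : {x : R // ¬∃ y : R, y ≠ 0 ∧ x * y = 0}, IsUnit (x : R) :=
      fun x => (reg_iff_unit _).mp x.2
    have hmkne : ∀ (m : ↥S) (x : {x : R // ¬∃ y : R, y ≠ 0 ∧ x * y = 0}),
        Ideal.Quotient.mk (m : Ideal R) (x : R) ≠ 0 := by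
      intro m x h0
      haveI : (m : Ideal R).IsMaximal := m.2
      have := (hvunit x).map (Ideal.Quotient.mk (m : Ideal R))
      rw [h0] at this
      exact not_isUnit_zero this
    -- the coloring
    have C : (regGraph R).Coloring (↥S → Bool) := by
      refine SimpleGraph.Coloring.mk
        (fun x m => sgn m (Ideal.Quotient.mk (m : Ideal R) (x : R))) ?_
      intro x y hadj hcne
      rw [regGraph_adj] at hadj
      obtain ⟨hne, hnu⟩ := hadj
      obtain ⟨M, hM, hmem⟩ := exists_max_ideal_of_mem_nonunits hnu
      have h1 : Ideal.Quotient.mk M ((x : R) + y) = 0 :=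
        Ideal.Quotient.eq_zero_iff_mem.mpr hmem
      rw [map_add] at h1
      have h2 : Ideal.Quotient.mk ((⟨M, hM⟩ : ↥S) : Ideal R) (y : R)
          = -(Ideal.Quotient.mk ((⟨M, hM⟩ : ↥S) : Ideal R) (x : R)) := by
        linear_combination h1
      have hc := congrFun hcne (⟨M, hM⟩ : ↥S)
      simp only at hc
      rw [h2] at hc
      exact hsgn ⟨M, hM⟩ _ (hmkne ⟨M, hM⟩ x) hc
    have hcardC : Fintype.card (↥S → Bool) = 2 ^ k := by
      rw [Fintype.card_fun, Fintype.card_bool, hcard]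
    -- the clique
    have hcop : Pairwise fun i j : ↥S => IsCoprime (i : Ideal R) (j : Ideal R) := by
      intro i j hij
      rw [Ideal.isCoprime_iff_sup_eq]
      exact Ideal.IsMaximal.coprime_of_ne i.2 j.2 (Subtype.coe_ne_coe.mpr hij)
    have hsurj : ∀ ε : ↥S → Bool, ∃ r : R, ∀ m : ↥S,
        (Ideal.Quotient.mk (m : Ideal R) r) = (if ε m then 1 else -1) := by
      intro ε
      obtain ⟨r, hr⟩ := Ideal.pi_quotient_surjective hcop
        (fun m : ↥S => if ε m then (1 : R ⧸ (m : Ideal R)) else -1)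
      exact ⟨r, fun m => (hr m)⟩
    choose u hu using hsurj
    have hone : ∀ m : ↥S, (1 : R ⧸ (m : Ideal R)) ≠ -1 :=
      fun m => one_ne_neg_one_of_oddChar m.2 (hodd m m.2)
    have huunit : ∀ ε : ↥S → Bool, IsUnit (u ε) := by
      intro ε
      by_contra h
      obtain ⟨M, hM, hmem⟩ := exists_max_ideal_of_mem_nonunits h
      haveI := hM
      have h0 : Ideal.Quotient.mk M (u ε) = 0 := Ideal.Quotient.eq_zero_iff_mem.mpr hmem
      have h1 := hu ε ⟨M, hM⟩
      rw [h0] at h1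
      cases hb : ε ⟨M, hM⟩ <;> rw [hb] at h1 <;> simp at h1
    set v : (↥S → Bool) → {x : R // ¬∃ y : R, y ≠ 0 ∧ x * y = 0} :=
      fun ε => ⟨u ε, (reg_iff_unit _).mpr (huunit ε)⟩ with hv
    have hvinj : Function.Injective v := by
      intro ε ε' h
      by_contra hne
      obtain ⟨m, hm⟩ := Function.ne_iff.mp hne
      have huu : u ε = u ε' := congrArg Subtype.val h
      have h2 : (if ε m then (1 : R ⧸ (m : Ideal R)) else -1)
          = (if ε' m then 1 else -1) := by
        rw [← hu ε m, ← hu ε' m, huu]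
      cases hb : ε m <;> cases hb' : ε' m
      · exact hm (hb.trans hb'.symm)
      · rw [hb, hb'] at h2
        simp only [if_true] at h2
        exact hone m ((if_neg (by simp)).symm.trans h2).symm
      · rw [hb, hb'] at h2
        simp only [if_true] at h2
        exact hone m (h2.trans (if_neg (by simp)))
      · exact hm (hb.trans hb'.symm)
    have hadjv : ∀ ε ε' : ↥S → Bool, ε ≠ ε' → (regGraph R).Adj (v ε) (v ε') := by
      intro ε ε' hne
      rw [regGraph_adj]
      refine ⟨fun h => hne (hvinj h), ?_⟩
      obtain ⟨m, hm⟩ := Function.ne_iff.mp hne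
      intro hunit
      have hmk : Ideal.Quotient.mk (m : Ideal R) (u ε + u ε') = 0 := by
        rw [map_add, hu ε m, hu ε' m]
        cases hb : ε m <;> cases hb' : ε' m
        · exact absurd (hb.trans hb'.symm) hm
        · rw [if_neg (by simp [hb]), if_pos (by simp [hb'])]; ring
        · rw [if_pos (by simp [hb]), if_neg (by simp [hb'])]; ring
        · exact absurd (hb.trans hb'.symm) hm
      have hmem : (u ε + u ε') ∈ (m : Ideal R) := Ideal.Quotient.eq_zero_iff_mem.mp hmk
      exact m.2.ne_top (Ideal.eq_top_of_isUnit_mem _ hmem hunit)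
    set t : Finset {x : R // ¬∃ y : R, y ≠ 0 ∧ x * y = 0} :=
      Finset.image v Finset.univ with ht
    have htcard : t.card = 2 ^ k := by
      rw [ht, Finset.card_image_of_injective _ hvinj, Finset.card_univ, hcardC]
    have htclique : (regGraph R).IsClique t := by
      intro a ha b hb hab
      simp only [ht, Finset.coe_image, Set.mem_image] at ha hb
      obtain ⟨ε, -, rfl⟩ := ha
      obtain ⟨ε', -, rfl⟩ := hb
      exact hadjv ε ε' (fun h => hab (congrArg v h))
    -- conclude
    have hχle : (regGraph R).chromaticNumber ≤ (2 ^ k : ℕ) := by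
      have := C.colorable.chromaticNumber_le
      rwa [hcardC] at this
    have hχge : ((2 ^ k : ℕ) : ℕ∞) ≤ (regGraph R).chromaticNumber := by
      have := htclique.card_le_chromaticNumber
      rwa [htcard] at this
    have hωge : 2 ^ k ≤ (regGraph R).cliqueNum := by
      have := htclique.card_le_cliqueNum
      rwa [htcard] at this
    have hωle : (regGraph R).cliqueNum ≤ 2 ^ k := by
      obtain ⟨s, hs'⟩ := (regGraph R).exists_isNClique_cliqueNum
      have := hs'.isClique.card_le_of_coloring C
      rwa [hs'.card_eq, hcardC] at this
    exact ⟨le_antisymm hχle hχge, le_antisymm hωle hωge⟩
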